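/- arXiv:1706.06028 — 2 statements merged into one kernel-verified Lean document; each statement's English description precedes it below -/
import Mathlib

section
/- With the same setup as the K-means relaxation, the K-means objective satisfies ∑_{k=1}^{K} ∑_{i ∈ C_k} ‖x_i - (1/|C_k|) ∑_{j ∈ C_k} x_j‖² = tr(D) - tr(D Q), where D = XᵀX is the Gram matrix and Q = YᵀY is the normalized cluster co-association matrix. -/
/-!
Expanding the squares, the within-cluster scatter of a cluster `s` equals
`∑ i ∈ s, ‖x i‖² - ‖∑ i ∈ s, x i‖² / |s|`. Summing over the clusters, the first terms add up to
`tr D`, and since `tr (D Yᵀ Y) = tr (Y D Yᵀ)` with `(Y D Yᵀ)ₖₖ = ‖∑ i, Y k i • x i‖²`, the second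
terms add up to `tr (D Q)`.
-/

open Matrix Finset

theorem sum_norm_sub_centroid_sq {ι E : Type*} [NormedAddCommGroup E] [InnerProductSpace ℝ E]
    (s : Finset ι) (x : ι → E) :
    ∑ i ∈ s, ‖x i - (#s : ℝ)⁻¹ • ∑ j ∈ s, x j‖ ^ 2
      = ∑ i ∈ s, ‖x i‖ ^ 2 - (#s : ℝ)⁻¹ * ‖∑ i ∈ s, x i‖ ^ 2 := by
  rcases s.eq_empty_or_nonempty with rfl | hs
  · simp
  have hc : (#s : ℝ) ≠ 0 := by positivity
  set S := ∑ j ∈ s, x j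
  have hS : ∑ i ∈ s, inner ℝ (x i) S = ‖S‖ ^ 2 := by
    rw [← sum_inner, real_inner_self_eq_norm_sq]
  simp only [norm_sub_sq_real, real_inner_smul_right, norm_smul, sum_add_distrib, sum_sub_distrib,
    ← mul_sum, hS, sum_const, nsmul_eq_mul, mul_pow, Real.norm_eq_abs, sq_abs]
  field_simp
  ring

theorem trace_gram_mul_transpose_mul_self {ι κ E : Type*} [Fintype ι] [Fintype κ]
    [NormedAddCommGroup E] [InnerProductSpace ℝ E] (x : ι → E) (Y : Matrix κ ι ℝ) :
    (gram ℝ x * (Yᵀ * Y)).trace = ∑ k, ‖∑ i, Y k i • x i‖ ^ 2 := by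
  rw [← Matrix.mul_assoc, trace_mul_comm, ← Matrix.mul_assoc]
  refine sum_congr rfl fun k _ => ?_
  rw [← real_inner_self_eq_norm_sq, ← star_dotProduct_gram_mulVec, star_trivial]
  simp only [diag_apply, Matrix.mul_apply, transpose_apply, dotProduct, mulVec, sum_mul, mul_sum]
  exact sum_congr rfl fun j _ => sum_congr rfl fun i _ => by
    rw [gram_apply, gram_apply, real_inner_comm]; ring

theorem norm_sum_inv_sqrt_card_indicator_smul_sq {ι E : Type*} [Fintype ι] [DecidableEq ι]
    [NormedAddCommGroup E] [InnerProductSpace ℝ E] (s : Finset ι) (x : ι → E) :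
    ‖∑ i, (if i ∈ s then (√(#s : ℝ))⁻¹ else 0) • x i‖ ^ 2 = (#s : ℝ)⁻¹ * ‖∑ i ∈ s, x i‖ ^ 2 := by
  simp only [ite_smul, zero_smul, sum_ite_mem, univ_inter, ← smul_sum, norm_smul, mul_pow,
    norm_inv, Real.norm_eq_abs, sq_abs, inv_pow, Real.sq_sqrt (Nat.cast_nonneg _)]

theorem Finset.sum_univ_eq_sum_sum_of_partition {ι κ M : Type*} [Fintype ι] [Fintype κ]
    [DecidableEq ι] [AddCommMonoid M] (C : κ → Finset ι)
    (hdisj : ∀ k l, k ≠ l → Disjoint (C k) (C l)) (hcover : ∀ i, ∃ k, i ∈ C k) (f : ι → M) :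
    ∑ i, f i = ∑ k, ∑ i ∈ C k, f i := by
  have huniv : univ.biUnion C = univ := eq_univ_of_forall fun i => by simpa using hcover i
  rw [← huniv, sum_biUnion fun k _ l _ hkl => hdisj k l hkl]

theorem stmt2_general (n K d : ℕ) (x : Fin n → EuclideanSpace ℝ (Fin d))
    (C : Fin K → Finset (Fin n))
    (hdisj : ∀ k l, k ≠ l → Disjoint (C k) (C l))
    (hcover : ∀ i, ∃ k, i ∈ C k)
    (Y : Matrix (Fin K) (Fin n) ℝ)
    (hY : ∀ k i, Y k i = if i ∈ C k then (Real.sqrt (C k).card)⁻¹ else 0)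
    (D : Matrix (Fin n) (Fin n) ℝ)
    (hD : ∀ i j, D i j = inner ℝ (x i) (x j)) :
    ∑ k, ∑ i ∈ C k, ‖x i - ((C k).card : ℝ)⁻¹ • ∑ j ∈ C k, x j‖^2
      = D.trace - (D * (Yᵀ * Y)).trace := by
  have hgram : D = gram ℝ x := Matrix.ext hD
  have htrace : D.trace = ∑ k, ∑ i ∈ C k, ‖x i‖ ^ 2 := by
    rw [trace, sum_univ_eq_sum_sum_of_partition C hdisj hcover]
    simp [hgram]
  have htraceQ : (D * (Yᵀ * Y)).trace = ∑ k, ((C k).card : ℝ)⁻¹ * ‖∑ i ∈ C k, x i‖ ^ 2 := by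
    simp only [hgram, trace_gram_mul_transpose_mul_self, hY,
      norm_sum_inv_sqrt_card_indicator_smul_sq]
  rw [htrace, htraceQ, ← sum_sub_distrib]
  exact sum_congr rfl fun k _ => sum_norm_sub_centroid_sq (C k) x

theorem stmt2 (n K d : ℕ) (x : Fin n → EuclideanSpace ℝ (Fin d))
    (C : Fin K → Finset (Fin n))
    (hne : ∀ k, (C k).Nonempty)
    (hdisj : ∀ k l, k ≠ l → Disjoint (C k) (C l))
    (hcover : ∀ i, ∃ k, i ∈ C k)
    (Y : Matrix (Fin K) (Fin n) ℝ)
    (hY : ∀ k i, Y k i = if i ∈ C k then (Real.sqrt (C k).card)⁻¹ else 0)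
    (D : Matrix (Fin n) (Fin n) ℝ)
    (hD : ∀ i j, D i j = inner ℝ (x i) (x j)) :
    ∑ k, ∑ i ∈ C k, ‖x i - ((C k).card : ℝ)⁻¹ • ∑ j ∈ C k, x j‖^2
      = D.trace - (D * (Yᵀ * Y)).trace :=
  stmt2_general n K d x C hdisj hcover Y hY D hD
end

section
/- Every real symmetric entrywise nonnegative matrix A that is diagonally dominant (i.e., A_{ii} ≥ ∑_{j ≠ i} A_{ij} for all i) is completely positive: there exists an entrywise nonnegative matrix B with A = BᵀB. -/
/-!
Write `d i = A i i - ∑_{j ≠ i} A i j ≥ 0`. Then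
`A = diagonal d + ∑_{i ≠ j} (A i j / 2) (eᵢ + eⱼ)(eᵢ + eⱼ)ᵀ`,
a nonnegative combination of a nonnegative diagonal matrix and of rank-one matrices `v vᵀ`
with `v ≥ 0`. Each of these is completely positive, and completely positive matrices form a
convex cone (stack the factors `B` on top of each other).
-/

open Matrix BigOperators

namespace Matrix

variable {n : Type*}

def IsCompletelyPositive (A : Matrix n n ℝ) : Prop :=
  ∃ (m : ℕ) (B : Matrix (Fin m) n ℝ), (∀ i j, 0 ≤ B i j) ∧ A = Bᵀ * B

namespace IsCompletelyPositive

theorem transpose_mul_self {ι : Type*} [Fintype ι] (B : Matrix ι n ℝ) (hB : ∀ i j, 0 ≤ B i j) :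
    IsCompletelyPositive (Bᵀ * B) := by
  let e := (Fintype.equivFin ι).symm
  refine ⟨Fintype.card ι, B.submatrix e id, fun i j => hB _ _, ?_⟩
  rw [transpose_submatrix, submatrix_mul_equiv, submatrix_id_id]

theorem zero : IsCompletelyPositive (0 : Matrix n n ℝ) :=
  ⟨0, 0, fun i => i.elim0, by simp⟩

theorem add {A A' : Matrix n n ℝ} (hA : IsCompletelyPositive A) (hA' : IsCompletelyPositive A') :
    IsCompletelyPositive (A + A') := by
  obtain ⟨m, B, hB, rfl⟩ := hA
  obtain ⟨m', B', hB', rfl⟩ := hA'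
  have h := transpose_mul_self (B.fromRows B') (by rintro (i | i) j <;> simp [hB, hB'])
  rwa [transpose_fromRows, fromCols_mul_fromRows] at h

theorem sum {ι : Type*} (s : Finset ι) {A : ι → Matrix n n ℝ}
    (hA : ∀ i ∈ s, IsCompletelyPositive (A i)) : IsCompletelyPositive (∑ i ∈ s, A i) := by
  classical
  induction s using Finset.induction_on with
  | empty => simpa using zero
  | insert a s ha ih =>
    rw [Finset.sum_insert ha]
    exact (hA a (s.mem_insert_self a)).add (ih fun i hi => hA i (Finset.mem_insert_of_mem hi))

theorem smul {A : Matrix n n ℝ} (hA : IsCompletelyPositive A) {c : ℝ} (hc : 0 ≤ c) :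
    IsCompletelyPositive (c • A) := by
  obtain ⟨m, B, hB, rfl⟩ := hA
  refine ⟨m, √c • B, fun i j => mul_nonneg (Real.sqrt_nonneg c) (hB i j), ?_⟩
  rw [transpose_smul, Matrix.smul_mul, Matrix.mul_smul, smul_smul, Real.mul_self_sqrt hc]

end IsCompletelyPositive

theorem isCompletelyPositive_vecMulVec {v : n → ℝ} (hv : 0 ≤ v) :
    IsCompletelyPositive (vecMulVec v v) := by
  rw [vecMulVec_eq Unit, ← transpose_replicateRow]
  exact .transpose_mul_self _ fun _ j => hv j

theorem isCompletelyPositive_diagonal [Fintype n] [DecidableEq n] {d : n → ℝ} (hd : 0 ≤ d) :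
    IsCompletelyPositive (diagonal d) := by
  have h := IsCompletelyPositive.transpose_mul_self (diagonal fun i => √(d i)) fun i j => by
    rw [diagonal_apply]; split_ifs <;> simp
  rwa [diagonal_transpose, diagonal_mul_diagonal, funext fun i => Real.mul_self_sqrt (hd i)] at h

variable [Fintype n]

theorem sum_smul_vecMulVec_single_add_single {R : Type*} [CommSemiring R] [DecidableEq n]
    (W : Matrix n n R) :
    ∑ i, ∑ j, W i j • vecMulVec (Pi.single i 1 + Pi.single j 1 : n → R)
        (Pi.single i 1 + Pi.single j 1) =
      diagonal (fun p => ∑ j, W p j + ∑ i, W i p) + W + Wᵀ := by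
  ext p q
  simp only [sum_apply, smul_apply, vecMulVec_apply, Pi.add_apply, Pi.single_apply, mul_add,
    mul_ite, mul_one, mul_zero, smul_eq_mul, Finset.sum_add_distrib, Finset.sum_ite_irrel,
    Finset.sum_const_zero, Finset.sum_ite_eq, Finset.mem_univ, ↓reduceIte, add_apply,
    diagonal_apply, transpose_apply]
  split_ifs with h
  · subst h; ring
  · ring

theorem IsSymm.eq_diagonal_add_sum_smul_vecMulVec {R : Type*} [Field R] [NeZero (2 : R)]
    [DecidableEq n] {A : Matrix n n R} (hA : A.IsSymm) :
    A = diagonal (fun i => A i i - ∑ j ∈ Finset.univ.erase i, A i j) +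
      ∑ i, ∑ j, (if i = j then 0 else A i j / 2) •
        vecMulVec (Pi.single i 1 + Pi.single j 1 : n → R) (Pi.single i 1 + Pi.single j 1) := by
  have h := sum_smul_vecMulVec_single_add_single (of fun i j => if i = j then 0 else A i j / 2)
  simp only [of_apply] at h
  rw [h]
  ext p q
  obtain rfl | hpq := eq_or_ne p q
  · have hrow : ∑ j, (if p = j then 0 else A p j / 2) + ∑ i, (if i = p then 0 else A i p / 2) =
        ∑ j ∈ Finset.univ.erase p, A p j := by
      simp only [hA.apply p, eq_comm (a := p), Finset.sum_ite, Finset.filter_ne',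
        Finset.sum_const_zero, zero_add, ← Finset.sum_add_distrib, add_halves]
    simp only [add_apply, diagonal_apply_eq, transpose_apply, of_apply, if_true, hrow]
    ring
  · simp only [add_apply, diagonal_apply_ne _ hpq, transpose_apply, of_apply, if_neg hpq,
      if_neg hpq.symm, hA.apply p q, zero_add, add_halves]

theorem IsSymm.isCompletelyPositive_of_diagonallyDominant [DecidableEq n] {A : Matrix n n ℝ}
    (hA : A.IsSymm) (hnn : ∀ i j, 0 ≤ A i j)
    (hdd : ∀ i, ∑ j ∈ Finset.univ.erase i, A i j ≤ A i i) : IsCompletelyPositive A := by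
  rw [hA.eq_diagonal_add_sum_smul_vecMulVec]
  refine (isCompletelyPositive_diagonal fun i => sub_nonneg.2 (hdd i)).add <|
    .sum _ fun i _ => .sum _ fun j _ => (isCompletelyPositive_vecMulVec ?_).smul ?_
  · exact add_nonneg (Pi.single_nonneg.2 zero_le_one) (Pi.single_nonneg.2 zero_le_one)
  · split_ifs
    exacts [le_rfl, div_nonneg (hnn i j) zero_le_two]

end Matrix

theorem stmt3 (n : ℕ) (A : Matrix (Fin n) (Fin n) ℝ)
    (hsymm : A.IsSymm) (hnn : ∀ i j, 0 ≤ A i j)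
    (hdd : ∀ i, ∑ j ∈ Finset.univ.erase i, A i j ≤ A i i) :
    ∃ (m : ℕ) (B : Matrix (Fin m) (Fin n) ℝ), (∀ i j, 0 ≤ B i j) ∧ A = Bᵀ * B :=
  hsymm.isCompletelyPositive_of_diagonallyDominant hnn hdd
end
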